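/- arXiv:2412.00262 — 5 statements merged into one kernel-verified Lean document; each statement's English description precedes it below -/
import Mathlib

section
/- Define F_t ∈ ℚ⟦q⟧ recursively by F_0 = 1 and F_{t+1} = (1/24)·E_2(q)·F_t + D(F_t). Then for every nonnegative integer t, 24^t · F_t · ∏_{k≥1}(1−q^k) = Σ_{n∈ℤ} (−1)^n (6n+1)^{2t} q^{n(3n+1)/2} in ℚ⟦q⟧. (Equivalently, Ramanujan's V_{2t}(q) equals 24^t·D^t(η(q))/η(q) for the Dedekind eta function η(q) = q^{1/24}∏_{k≥1}(1−q^k).) -/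
open PowerSeries Finset

noncomputable section

/-- The operator `D = q·d/dq` on `ℚ⟦q⟧`, coefficientwise `aₙ ↦ n·aₙ`. -/
def Dq (F : ℚ⟦X⟧) : ℚ⟦X⟧ := PowerSeries.mk fun n => (n : ℚ) * coeff n F

/-- `E₂(q) = 1 - 24 Σ_{n≥1} σ₁(n) qⁿ`. -/
def E2 : ℚ⟦X⟧ := PowerSeries.mk fun n => if n = 0 then 1 else -24 * ∑ d ∈ n.divisors, (d : ℚ)

/-- `E₄(q) = 1 + 240 Σ_{n≥1} σ₃(n) qⁿ`. -/
def E4 : ℚ⟦X⟧ := PowerSeries.mk fun n => if n = 0 then 1 else 240 * ∑ d ∈ n.divisors, (d : ℚ) ^ 3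

/-- `E₆(q) = 1 - 504 Σ_{n≥1} σ₅(n) qⁿ`. -/
def E6 : ℚ⟦X⟧ := PowerSeries.mk fun n => if n = 0 then 1 else -504 * ∑ d ∈ n.divisors, (d : ℚ) ^ 5

/-- `∏_{k≥1} (1 - qᵏ)`, defined coefficientwise by truncated finite products
(factors with `k > N` do not affect the `N`-th coefficient). -/
def eulerProd : ℚ⟦X⟧ :=
  PowerSeries.mk fun N => coeff N (∏ k ∈ Finset.Icc 1 N, (1 - X ^ k : ℚ⟦X⟧))

/-- `Σ_{n ∈ ℤ} (-1)ⁿ (6n+1)^{2t} q^{n(3n+1)/2}` (any `n` with `n(3n+1)/2 = N`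
satisfies `|n| ≤ N`). -/
def pentagonalSum (t : ℕ) : ℚ⟦X⟧ := PowerSeries.mk fun N =>
  ∑ n ∈ Finset.Icc (-(N : ℤ)) (N : ℤ),
    if n * (3 * n + 1) = 2 * N then (-1 : ℚ) ^ n * ((6 * n + 1 : ℤ) : ℚ) ^ (2 * t) else 0

/-- `θ₂(q)⁴ = 16 q (Σ_{n≥0} q^{n(n+1)})⁴`. -/
def theta2four : ℚ⟦X⟧ :=
  16 * X * (PowerSeries.mk fun N => ∑ n ∈ Finset.range (N + 1),
    if n * (n + 1) = N then (1 : ℚ) else 0) ^ 4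

/-- `θ₃(q) = 1 + 2 Σ_{n≥1} q^{n²}`. -/
def theta3 : ℚ⟦X⟧ :=
  1 + 2 * PowerSeries.mk fun N => ∑ n ∈ Finset.Icc 1 N, if n ^ 2 = N then (1 : ℚ) else 0

/-- `θ₄(q) = 1 + 2 Σ_{n≥1} (-1)ⁿ q^{n²}`. -/
def theta4 : ℚ⟦X⟧ :=
  1 + 2 * PowerSeries.mk fun N => ∑ n ∈ Finset.Icc 1 N, if n ^ 2 = N then (-1 : ℚ) ^ n else 0

/-- `Θ_{r,s} = θ₂^{4r} θ₃^{4s} + θ₂^{4s} θ₃^{4r}`. -/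
def Theta (r s : ℕ) : ℚ⟦X⟧ :=
  theta2four ^ r * theta3 ^ (4 * s) + theta2four ^ s * theta3 ^ (4 * r)

/-- MacMahon's `C_{2t}(q) = Σ_{0<s₁<⋯<s_t} q^{Σ(2sᵢ-1)} ∏ (1-q^{2sᵢ-1})⁻²`,
defined coefficientwise: tuples with some `sᵢ > N+1` do not affect the `N`-th coefficient. -/
def Cmac (t : ℕ) : ℚ⟦X⟧ := PowerSeries.mk fun N =>
  coeff N (∑ S ∈ (Finset.Icc 1 (N + 1)).powersetCard t,
    ∏ s ∈ S, (X ^ (2 * s - 1) * ((1 - X ^ (2 * s - 1) : ℚ⟦X⟧)⁻¹) ^ 2))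

/-- MacMahon's `U_{2t}(q) = Σ_{0<k₁<⋯<k_t} q^{Σkᵢ} ∏ (1-q^{kᵢ})⁻²`,
defined coefficientwise by truncation. -/
def Umac (t : ℕ) : ℚ⟦X⟧ := PowerSeries.mk fun N =>
  coeff N (∑ S ∈ (Finset.Icc 1 (N + 1)).powersetCard t,
    ∏ k ∈ S, (X ^ k * ((1 - X ^ k : ℚ⟦X⟧)⁻¹) ^ 2))

/-- `U*_{2t}(q) = Σ_{0<k₁≤⋯≤k_t} q^{Σkᵢ} ∏ (1-q^{kᵢ})⁻²`, a sum over multisets of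
size `t`, defined coefficientwise by truncation. -/
def UmacStar (t : ℕ) : ℚ⟦X⟧ := PowerSeries.mk fun N =>
  coeff N (∑ m ∈ (Finset.Icc 1 (N + 1)).sym t,
    ((m : Multiset ℕ).map fun k => X ^ k * ((1 - X ^ k : ℚ⟦X⟧)⁻¹) ^ 2).prod)

/-- `E₂(q²)`, the substitution `q ↦ q²` in `E₂`. -/
def E2sq : ℚ⟦X⟧ := PowerSeries.mk fun n => if 2 ∣ n then coeff (n / 2) E2 else 0

/-- `G₂(q) = 2 E₂(q²) - E₂(q)`. -/
def G2 : ℚ⟦X⟧ := 2 * E2sq - E2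

/-- `F₀ = 1`, `F_{t+1} = (1/24)E₂·F_t + D(F_t)`, encoding `F_t = D^t(η)/η / 24^... `. -/
def Fram : ℕ → ℚ⟦X⟧
  | 0 => 1
  | t + 1 => (1 / 24 : ℚ) • (E2 * Fram t) + Dq (Fram t)

/-!
For `t = 0` the identity is Euler's pentagonal number theorem. Logarithmic differentiation of
`∏ (1 - qᵏ)` gives `D∏ / ∏ = -∑ k qᵏ / (1 - qᵏ) = (E₂ - 1) / 24`, i.e. `E₂ ∏ = ∏ + 24 D∏`, so
`G_t = 24ᵗ F_t ∏` satisfies `G_{t+1} = G_t + 24 D G_t`. The pentagonal sums obey the same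
recursion, because at the exponent `N = n(3n+1)/2` one has `(6n+1)² = 1 + 24N`.
-/

theorem Derivation.leibniz_prod_of_eq_mul {R A ι : Type*} [CommSemiring R] [CommSemiring A]
    [Algebra R A] (D : Derivation R A A) (s : Finset ι) {f g : ι → A}
    (h : ∀ i ∈ s, D (f i) = g i * f i) : D (∏ i ∈ s, f i) = (∑ i ∈ s, g i) * ∏ i ∈ s, f i := by
  classical
  induction s using Finset.induction_on with
  | empty => simp
  | insert a s ha ih =>
    rw [Finset.forall_mem_insert] at h
    rw [Finset.prod_insert ha, Finset.sum_insert ha, Derivation.leibniz, ih h.2, h.1,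
      smul_eq_mul, smul_eq_mul]
    ring

def qDeriv : Derivation ℚ ℚ⟦X⟧ ℚ⟦X⟧ := (X : ℚ⟦X⟧) • derivative ℚ

theorem qDeriv_apply (F : ℚ⟦X⟧) : qDeriv F = Dq F := by
  ext n
  rcases n with _ | n
  · simp [qDeriv, Dq]
  · simp [qDeriv, Dq, coeff_derivative, mul_comm]

theorem coeff_Dq (F : ℚ⟦X⟧) (n : ℕ) : coeff n (Dq F) = n * coeff n F := coeff_mk _ _

theorem Dq_X_pow (k : ℕ) : Dq (X ^ k) = (k : ℚ) • X ^ k := by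
  ext n
  simp only [coeff_Dq, coeff_X_pow, map_smul, smul_eq_mul]
  split_ifs with h <;> simp [h]

theorem Dq_mul (F G : ℚ⟦X⟧) : Dq (F * G) = Dq F * G + F * Dq G := by
  rw [← qDeriv_apply, ← qDeriv_apply, ← qDeriv_apply, Derivation.leibniz, smul_eq_mul, smul_eq_mul,
    add_comm, mul_comm G]

theorem Dq_smul (c : ℚ) (F : ℚ⟦X⟧) : Dq (c • F) = c • Dq F := by
  rw [← qDeriv_apply, ← qDeriv_apply, Derivation.map_smul]

theorem inv_one_sub_X_pow {K : Type*} [Field K] {k : ℕ} (hk : k ≠ 0) :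
    (1 - X ^ k : K⟦X⟧)⁻¹ = expand k hk (mk 1) := by
  rw [PowerSeries.inv_eq_iff_mul_eq_one (by simp [hk])]
  simpa [expand_X] using congrArg (expand k hk) (mk_one_mul_one_sub_eq_one K)

theorem coeff_X_pow_mul_inv_one_sub_X_pow {K : Type*} [Field K] {k : ℕ} (hk : k ≠ 0) (n : ℕ) :
    coeff n (X ^ k * (1 - X ^ k : K⟦X⟧)⁻¹) = if k ≤ n ∧ k ∣ n then 1 else 0 := by
  rw [inv_one_sub_X_pow hk, coeff_X_pow_mul', coeff_expand]
  by_cases hkn : k ≤ n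
  · simp [hkn, Nat.dvd_sub_iff_left hkn dvd_rfl]
  · simp [hkn]

def lambertTrunc (N : ℕ) : ℚ⟦X⟧ := ∑ k ∈ Icc 1 N, (k : ℚ) • (X ^ k * (1 - X ^ k)⁻¹)

def eulerTrunc (N : ℕ) : ℚ⟦X⟧ := ∏ k ∈ Icc 1 N, (1 - X ^ k)

theorem coeff_lambertTrunc {n N : ℕ} (hn : n ≤ N) :
    coeff n (lambertTrunc N) = ∑ d ∈ n.divisors, (d : ℚ) := by
  have hdiv : (Icc 1 N).filter (fun k => k ≤ n ∧ k ∣ n) = n.divisors := by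
    ext k
    simp only [mem_filter, mem_Icc, Nat.mem_divisors]
    constructor
    · rintro ⟨⟨hk, -⟩, hkn, hdvd⟩
      exact ⟨hdvd, by omega⟩
    · rintro ⟨hdvd, hn0⟩
      have hkn := Nat.le_of_dvd (Nat.pos_of_ne_zero hn0) hdvd
      exact ⟨⟨Nat.pos_of_dvd_of_pos hdvd (Nat.pos_of_ne_zero hn0), by omega⟩, hkn, hdvd⟩
  rw [← hdiv, sum_filter, lambertTrunc, map_sum]
  refine sum_congr rfl fun k hk => ?_
  rw [map_smul, coeff_X_pow_mul_inv_one_sub_X_pow (by simp at hk; omega), smul_eq_mul, mul_ite,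
    mul_one, mul_zero]

theorem coeff_E2_of_le {n N : ℕ} (hn : n ≤ N) :
    coeff n E2 = coeff n (1 - (24 : ℚ) • lambertTrunc N) := by
  rw [map_sub, map_smul, coeff_lambertTrunc hn, coeff_one, E2, coeff_mk]
  split_ifs with h <;> simp [h]

theorem Dq_eulerTrunc (N : ℕ) : Dq (eulerTrunc N) = -(lambertTrunc N * eulerTrunc N) := by
  rw [← qDeriv_apply, eulerTrunc, Derivation.leibniz_prod_of_eq_mul qDeriv _
      (g := fun k : ℕ => -((k : ℚ) • (X ^ k * (1 - X ^ k)⁻¹))), sum_neg_distrib, neg_mul,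
    lambertTrunc]
  intro k hk
  have hk0 : k ≠ 0 := by simp at hk; omega
  rw [map_sub, Derivation.map_one_eq_zero, zero_sub, qDeriv_apply, Dq_X_pow, neg_mul,
    smul_mul_assoc, mul_assoc, PowerSeries.inv_mul_cancel _ (by simp [hk0]), mul_one]

theorem coeff_prod_one_sub_X_pow_of_subset {R : Type*} [CommRing R] {s t : Finset ℕ}
    (hst : s ⊆ t) {m : ℕ} (h : ∀ k ∈ t \ s, m < k) :
    coeff m (∏ k ∈ t, (1 - X ^ k : R⟦X⟧)) = coeff m (∏ k ∈ s, (1 - X ^ k : R⟦X⟧)) := by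
  nontriviality R
  rw [← prod_sdiff hst, mul_comm]
  exact coeff_mul_prod_one_sub_of_lt_order m _ _ _ fun k hk => by simpa using h k hk

theorem coeff_eulerProd {m N : ℕ} (h : m ≤ N) : coeff m eulerProd = coeff m (eulerTrunc N) := by
  rw [eulerProd, coeff_mk, eulerTrunc, coeff_prod_one_sub_X_pow_of_subset (Icc_subset_Icc_right h)]
  intro k hk
  simp only [mem_sdiff, mem_Icc] at hk
  omega

theorem coeff_mul_eq_of_coeff_eq {R : Type*} [Semiring R] {f f' g g' : R⟦X⟧} {N : ℕ}
    (hf : ∀ i ≤ N, coeff i f = coeff i f') (hg : ∀ j ≤ N, coeff j g = coeff j g') :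
    coeff N (f * g) = coeff N (f' * g') := by
  rw [coeff_mul, coeff_mul]
  refine sum_congr rfl fun p hp => ?_
  rw [HasAntidiagonal.mem_antidiagonal] at hp
  rw [hf p.1 (by omega), hg p.2 (by omega)]

theorem E2_mul_eulerProd : E2 * eulerProd = eulerProd + (24 : ℚ) • Dq eulerProd := by
  ext N
  have hDq := congrArg (coeff N) (Dq_eulerTrunc N)
  rw [coeff_Dq, map_neg] at hDq
  rw [coeff_mul_eq_of_coeff_eq (fun i hi => coeff_E2_of_le hi) (fun j hj => coeff_eulerProd hj),
    map_add, map_smul, coeff_Dq, coeff_eulerProd le_rfl, sub_mul, one_mul, smul_mul_assoc,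
    map_sub, map_smul, smul_eq_mul, smul_eq_mul]
  linarith

theorem eulerProd_eq_pentagonalSeries : eulerProd = pentagonalSeries ℚ := by
  ext N
  -- Mathlib's theorem concerns `∏ n ∈ s, (1 - X ^ (n + 1))` for all large `s`; enlarging
  -- `Icc 1 N` by factors `1 - X ^ k` with `k > N` leaves the coefficient of `X ^ N` unchanged.
  obtain ⟨s, hs⟩ := Filter.eventually_atTop.mp (coeff_prod_one_sub_X_pow_eventually_eq ℚ N)
  rw [← hs (s ∪ range N) subset_union_left, coeff_eulerProd le_rfl, eulerTrunc,
    show ∏ n ∈ s ∪ range N, (1 - X ^ (n + 1) : ℚ⟦X⟧) =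
      ∏ k ∈ (s ∪ range N).map (addRightEmbedding 1), (1 - X ^ k) by
        simp only [prod_map, addRightEmbedding_apply]]
  refine (coeff_prod_one_sub_X_pow_of_subset (fun k hk => ?_) fun k hk => ?_).symm
  · simp only [mem_Icc] at hk
    exact mem_map.mpr ⟨k - 1, mem_union_right _ (mem_range.mpr (by omega)), by simp; omega⟩
  · simp only [mem_sdiff, mem_map, mem_Icc, addRightEmbedding_apply] at hk
    omega

theorem pentagonal_neg_eq_iff {n : ℤ} {N : ℕ} : pentagonal (-n) = N ↔ n * (3 * n + 1) = 2 * N := by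
  rw [← two_mul_natCast_pentagonal_neg]
  omega

theorem mem_Icc_of_pentagonal_neg_eq {n : ℤ} {N : ℕ} (h : pentagonal (-n) = N) :
    n ∈ Icc (-(N : ℤ)) N := by
  rw [pentagonal_neg_eq_iff] at h
  rw [mem_Icc]
  constructor <;> nlinarith

theorem pentagonalSum_zero : pentagonalSum 0 = pentagonalSeries ℚ := by
  ext N
  simp only [pentagonalSum, coeff_mk, mul_zero, pow_zero, mul_one, ← pentagonal_neg_eq_iff]
  by_cases h : ∃ k, pentagonal k = N
  · obtain ⟨k, rfl⟩ := h
    rw [coeff_pentagonalSeries_pentagonal, ← Int.negOnePow_neg, Int.cast_negOnePow,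
      sum_eq_single (-k)]
    · simp
    · intro n _ hn
      rw [if_neg]
      exact fun hk => hn (neg_eq_iff_eq_neg.mp (pentagonal_injective hk))
    · intro hk
      exact absurd (mem_Icc_of_pentagonal_neg_eq (by simp)) hk
  · rw [coeff_pentagonalSeries_eq_zero _ (by simpa using h)]
    exact sum_eq_zero fun n _ => if_neg fun hn => h ⟨-n, hn⟩

theorem pentagonalSum_succ (t : ℕ) :
    pentagonalSum (t + 1) = pentagonalSum t + (24 : ℚ) • Dq (pentagonalSum t) := by
  ext N
  simp only [pentagonalSum, map_add, coeff_mk, map_smul, coeff_Dq, smul_eq_mul, mul_sum,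
    ← sum_add_distrib]
  refine sum_congr rfl fun n _ => ?_
  split_ifs with hn
  · have hsq : ((6 * n + 1 : ℤ) : ℚ) ^ 2 = 1 + 24 * N := by
      push_cast
      linear_combination (12 : ℚ) * (by exact_mod_cast hn : (n : ℚ) * (3 * n + 1) = 2 * N)
    rw [mul_add, pow_add, hsq]
    ring
  · simp

/-- `V_{2t} = 24^t D^t(η)/η`: `24^t · F_t · ∏(1-qᵏ) = Σ_{n∈ℤ} (-1)ⁿ(6n+1)^{2t} q^{n(3n+1)/2}`. -/
theorem ramanujan_V_eta_quotient (t : ℕ) :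
    ((24 : ℚ) ^ t) • (Fram t * eulerProd) = pentagonalSum t := by
  induction t with
  | zero => simp [Fram, eulerProd_eq_pentagonalSeries, pentagonalSum_zero]
  | succ t ih =>
    have hE : Fram t * (E2 * eulerProd) =
        Fram t * eulerProd + (24 : ℚ) • (Fram t * Dq eulerProd) := by
      rw [E2_mul_eulerProd, mul_add, mul_smul_comm]
    rw [pentagonalSum_succ, ← ih, Dq_smul, Dq_mul, Fram, add_mul, smul_mul_assoc, mul_comm E2,
      mul_assoc, hE]
    module
end
end

section
/- For every positive integer t, U*_{2t}(q) = (−1)^t · Σ over all partitions (1^{m_1}, 2^{m_2}, …, t^{m_t}) of t of (−1)^{m_1+⋯+m_t} · ((m_1+⋯+m_t)!/(m_1!⋯m_t!)) · ∏_{k=1}^t (U_{2k}(q))^{m_k}, as an identity in ℚ⟦q⟧. -/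
open PowerSeries Finset

noncomputable section

/-! With `x k = q^k (1 - q^k)⁻²`, `U*_{2t}` is the complete homogeneous symmetric function `h_t`
of the `x k` and `U_{2k}` is the elementary one `e_k`. Since `∑ hₙ zⁿ` is the inverse of
`E(z) = ∏ (1 - x_k z) = ∑ (-1)ᵏ eₖ zᵏ`, we get `∑ hₙ zⁿ = ∑ₙ (1 - E(z))ⁿ`, and the multinomial
theorem turns the coefficient of `zᵗ` into the sum over partitions of `t`. Only `x k` with
`k ≤ N + 1` affect the coefficient of `q^N`, so the identity for finitely many variables,
read modulo `q^(N+1)`, gives the theorem. -/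

namespace Finset

theorem sum_le_of_sum_succ_mul_eq {t : ℕ} {m : Fin t → ℕ} (hm : ∑ i, (i.1 + 1) * m i = t) :
    ∑ i, m i ≤ t :=
  calc ∑ i, m i ≤ ∑ i : Fin t, (i.1 + 1) * m i :=
        sum_le_sum fun i _ => Nat.le_mul_of_pos_left (m i) i.1.succ_pos
    _ = t := hm

theorem sum_range_sum_piAntidiag_eq_sum_piFinset {M : Type*} [AddCommMonoid M] (t : ℕ)
    (f : (Fin t → ℕ) → M) :
    ∑ n ∈ range (t + 1), ∑ m ∈ piAntidiag (univ : Finset (Fin t)) n,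
        (if ∑ i, (i.1 + 1) * m i = t then f m else 0) =
      ∑ m ∈ Fintype.piFinset fun _ : Fin t => range (t + 1),
        if ∑ i, (i.1 + 1) * m i = t then f m else 0 := by
  simp only [← sum_filter]
  rw [← sum_fiberwise_of_maps_to (g := fun m : Fin t → ℕ => ∑ i, m i) (t := range (t + 1))]
  · refine sum_congr rfl fun n _ => sum_congr ?_ fun _ _ => rfl
    ext m
    simp only [mem_filter, mem_piAntidiag, Fintype.mem_piFinset, mem_range, mem_univ,
      implies_true, and_true]
    constructor
    · rintro ⟨rfl, hm⟩
      refine ⟨⟨fun i => Nat.lt_succ_of_le ?_, hm⟩, rfl⟩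
      exact (single_le_sum (fun _ _ => Nat.zero_le _) (mem_univ i)).trans
        (sum_le_of_sum_succ_mul_eq hm)
    · rintro ⟨⟨_, hm⟩, rfl⟩
      exact ⟨rfl, hm⟩
  · intro m hm
    exact mem_range.2 (Nat.lt_succ_of_le (sum_le_of_sum_succ_mul_eq (mem_filter.1 hm).2))

theorem sum_finsuppAntidiag_eq_sum_piAntidiag {ι M : Type*} [DecidableEq ι] [AddCommMonoid M]
    (s : Finset ι) (n : ℕ) (g : (ι → ℕ) → M) :
    ∑ l ∈ s.finsuppAntidiag n, g l = ∑ f ∈ s.piAntidiag n, g f := by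
  refine sum_bij (fun l _ => ⇑l) (fun l hl => ?_) (fun _ _ _ _ h => DFunLike.coe_injective h)
    (fun f hf => ?_) fun _ _ => rfl
  · rw [mem_finsuppAntidiag] at hl
    exact mem_piAntidiag.2 ⟨hl.1, fun i hi => hl.2 (Finsupp.mem_support_iff.2 hi)⟩
  · obtain ⟨hsum, hsupp⟩ := mem_piAntidiag.1 hf
    exact ⟨Finsupp.onFinset s f hsupp,
      mem_finsuppAntidiag.2 ⟨hsum, Finsupp.support_onFinset_subset⟩, rfl⟩

end Finset

namespace PowerSeries

section CommSemiring

variable {R : Type*} [CommSemiring R]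

theorem coeff_pow_eq_sum_piAntidiag {u : R⟦X⟧} (hu : constantCoeff u = 0) (t n : ℕ) :
    coeff t (u ^ n) = ∑ m ∈ piAntidiag univ n,
      if ∑ i : Fin t, (i.1 + 1) * m i = t then
        (Nat.multinomial univ m : R) * ∏ i, coeff (i.1 + 1) u ^ m i
      else 0 := by
  have htrunc : (trunc (t + 1) u : R⟦X⟧) = ∑ i : Fin t, C (coeff (i.1 + 1) u) * X ^ (i.1 + 1) := by
    rw [← Polynomial.eval₂_C_X_eq_coe, eval₂_trunc_eq_sum_range, sum_range, Fin.sum_univ_succ]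
    simp [hu]
  have hcoeff_trunc (φ : R⟦X⟧) : coeff t φ = (trunc (t + 1) φ).coeff t := by
    rw [coeff_trunc, if_pos (lt_add_one t)]
  rw [hcoeff_trunc, ← trunc_trunc_pow, ← hcoeff_trunc, htrunc, sum_pow_eq_sum_piAntidiag, map_sum]
  refine sum_congr rfl fun m _ => ?_
  rw [prod_congr rfl fun i _ => by rw [mul_pow, ← map_pow, ← pow_mul], prod_mul_distrib,
    prod_pow_eq_pow_sum, ← map_prod, ← map_natCast C, ← mul_assoc, ← map_mul, coeff_C_mul_X_pow]
  simp only [mul_comm, eq_comm]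

theorem coeff_prod_mk_pow {ι : Type*} [DecidableEq ι] (s : Finset ι) (x : ι → R) (t : ℕ) :
    coeff t (∏ k ∈ s, mk fun n => x k ^ n) = ∑ m ∈ s.sym t, ((m : Multiset ι).map x).prod := by
  simp only [coeff_prod, coeff_mk]
  rw [sum_finsuppAntidiag_eq_sum_piAntidiag s t fun f => ∏ i ∈ s, x i ^ f i,
    ← map_sym_eq_piAntidiag, sum_map]
  refine sum_congr rfl fun m hm => ?_
  simp only [Function.Embedding.coeFn_mk, Sym.val_eq_coe]
  rw [prod_multiset_map_count]
  refine (prod_subset (fun i hi => mem_sym_iff.1 hm i (Multiset.mem_toFinset.1 hi)) ?_).symm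
  intro i _ hi
  rw [Multiset.mem_toFinset, Sym.val_eq_coe] at hi
  simp [hi]

theorem coeff_sum_powersetCard_Icc_prod_of_le {f : ℕ → R⟦X⟧} (hf : ∀ k, X ^ k ∣ f k) {n N : ℕ}
    (hn : n ≤ N) (j : ℕ) :
    coeff n (∑ S ∈ (Icc 1 (N + 1)).powersetCard j, ∏ k ∈ S, f k) =
      coeff n (∑ S ∈ (Icc 1 (n + 1)).powersetCard j, ∏ k ∈ S, f k) := by
  simp only [map_sum]
  refine (sum_subset (powersetCard_mono (Icc_subset_Icc_right (by omega))) fun S hS hS' => ?_).symm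
  rw [mem_powersetCard] at hS hS'
  obtain ⟨k, hkS, hk⟩ := not_subset.1 fun h => hS' ⟨h, hS.2⟩
  have hnk : n < k := by
    have := mem_Icc.1 (hS.1 hkS)
    rw [mem_Icc] at hk
    omega
  exact X_pow_dvd_iff.1 ((hf k).trans (dvd_prod_of_mem f hkS)) n hnk

end CommSemiring

variable {R : Type*} [CommRing R]

theorem mk_pow_mul_one_sub_C_mul_X (a : R) : (mk fun n => a ^ n) * (1 - C a * X) = 1 := by
  simpa only [map_mul, map_sub, map_one, rescale_X, rescale_mk, Pi.one_apply, mul_one] using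
    congrArg (rescale a) (mk_one_mul_one_sub_eq_one R)

theorem mk_span_X_pow_eq_iff {n : ℕ} {f g : R⟦X⟧} :
    Ideal.Quotient.mk (Ideal.span {X ^ n}) f = Ideal.Quotient.mk (Ideal.span {X ^ n}) g ↔
      ∀ m < n, coeff m f = coeff m g := by
  simp only [Ideal.Quotient.eq, Ideal.mem_span_singleton, X_pow_dvd_iff, map_sub, sub_eq_zero]

theorem coeff_eq_sum_coeff_pow_of_one_sub_mul_eq_one {u G : R⟦X⟧} (hu : constantCoeff u = 0)
    (hG : (1 - u) * G = 1) (t : ℕ) :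
    coeff t G = ∑ n ∈ range (t + 1), coeff t (u ^ n) := by
  have hdvd : X ^ (t + 1) ∣ G - ∑ n ∈ range (t + 1), u ^ n := by
    have hrem : G - ∑ n ∈ range (t + 1), u ^ n = u ^ (t + 1) * G := by
      linear_combination (∑ n ∈ range (t + 1), u ^ n) * hG - G * mul_neg_geom_sum u (t + 1)
    rw [hrem]
    exact (pow_dvd_pow_of_dvd (X_dvd_iff.2 hu) _).mul_right G
  rw [← map_sum, ← sub_eq_zero, ← map_sub]
  exact X_pow_dvd_iff.1 hdvd t (lt_add_one t)

theorem coeff_eq_sum_partitions_of_one_sub_mul_eq_one {u G : R⟦X⟧} (hu : constantCoeff u = 0)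
    (hG : (1 - u) * G = 1) (t : ℕ) :
    coeff t G = ∑ m ∈ Fintype.piFinset fun _ : Fin t => range (t + 1),
      if ∑ i, (i.1 + 1) * m i = t then
        (Nat.multinomial univ m : R) * ∏ i, coeff (i.1 + 1) u ^ m i
      else 0 := by
  simp only [coeff_eq_sum_coeff_pow_of_one_sub_mul_eq_one hu hG, coeff_pow_eq_sum_piAntidiag hu,
    sum_range_sum_piAntidiag_eq_sum_piFinset]

theorem coeff_prod_one_sub_C_mul_X {ι : Type*} (s : Finset ι) (x : ι → R) (j : ℕ) :
    coeff j (∏ k ∈ s, (1 - C (x k) * X)) = (-1) ^ j * ∑ S ∈ s.powersetCard j, ∏ k ∈ S, x k := by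
  simp only [sub_eq_add_neg, prod_one_add, prod_neg, prod_mul_distrib, prod_const, ← map_prod,
    map_sum, powersetCard_eq_filter, sum_filter, mul_sum]
  refine sum_congr rfl fun S _ => ?_
  rw [show (-1 : R⟦X⟧) ^ #S = C ((-1) ^ #S) by simp, ← mul_assoc, ← map_mul, coeff_C_mul_X_pow]
  simp only [eq_comm]
  split_ifs with h <;> simp [h]

end PowerSeries

theorem Finset.sum_sym_prod_eq_sum_partitions {R ι : Type*} [CommRing R] [DecidableEq ι]
    (s : Finset ι) (x : ι → R) (t : ℕ) :
    ∑ m ∈ s.sym t, ((m : Multiset ι).map x).prod =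
      (-1) ^ t * ∑ m ∈ Fintype.piFinset fun _ : Fin t => range (t + 1),
        if ∑ i, (i.1 + 1) * m i = t then
          ((-1) ^ (∑ i, m i) * (Nat.multinomial univ m : R)) *
            ∏ i : Fin t, (∑ S ∈ s.powersetCard (i.1 + 1), ∏ k ∈ S, x k) ^ m i
        else 0 := by
  set P : R⟦X⟧ := ∏ k ∈ s, (1 - C (x k) * X)
  have hu : constantCoeff (1 - P) = 0 := by simp [P, map_prod]
  have hG : (1 - (1 - P)) * ∏ k ∈ s, PowerSeries.mk (fun n => x k ^ n) = 1 := by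
    rw [sub_sub_cancel, ← prod_mul_distrib]
    exact prod_eq_one fun k _ => by rw [mul_comm, mk_pow_mul_one_sub_C_mul_X]
  have hcoeff (j : ℕ) : coeff (j + 1) (1 - P) =
      (-1) ^ (j + 2) * ∑ S ∈ s.powersetCard (j + 1), ∏ k ∈ S, x k := by
    rw [map_sub, coeff_one, if_neg j.succ_ne_zero, coeff_prod_one_sub_C_mul_X]
    ring
  rw [← coeff_prod_mk_pow, coeff_eq_sum_partitions_of_one_sub_mul_eq_one hu hG, mul_sum]
  refine sum_congr rfl fun m _ => ?_
  split_ifs with hm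
  · have hsign : ∑ i : Fin t, (i.1 + 2) * m i = t + ∑ i, m i :=
      calc ∑ i : Fin t, (i.1 + 2) * m i = ∑ i : Fin t, ((i.1 + 1) * m i + m i) :=
            sum_congr rfl fun i _ => by ring
        _ = t + ∑ i, m i := by rw [sum_add_distrib, hm]
    rw [prod_congr rfl fun i _ => by rw [hcoeff, mul_pow, ← pow_mul], prod_mul_distrib,
      prod_pow_eq_pow_sum, hsign, pow_add]
    ring
  · simp

theorem mk_span_X_pow_Umac (N j : ℕ) :
    Ideal.Quotient.mk (Ideal.span {X ^ (N + 1)}) (Umac j) =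
      Ideal.Quotient.mk (Ideal.span {X ^ (N + 1)})
        (∑ S ∈ (Icc 1 (N + 1)).powersetCard j, ∏ k ∈ S, (X ^ k * ((1 - X ^ k : ℚ⟦X⟧)⁻¹) ^ 2)) :=
  mk_span_X_pow_eq_iff.2 fun n hn => by
    rw [Umac, coeff_mk, coeff_sum_powersetCard_Icc_prod_of_le (N := N) (fun k => dvd_mul_right _ _)
      (Nat.le_of_lt_succ hn)]

theorem UmacStar_in_terms_of_Umac_general (t : ℕ) :
    UmacStar t = ((-1 : ℚ) ^ t) •
      ∑ m ∈ Fintype.piFinset fun _ : Fin t => Finset.range (t + 1),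
        if ∑ i, (i.1 + 1) * m i = t then
          ((-1 : ℚ) ^ (∑ i, m i) * (Nat.multinomial Finset.univ m : ℚ)) •
            ∏ i : Fin t, Umac (i.1 + 1) ^ m i
        else 0 := by
  ext N
  rw [UmacStar, coeff_mk, sum_sym_prod_eq_sum_partitions]
  refine mk_span_X_pow_eq_iff.1 ?_ N (lt_add_one N)
  simp only [smul_eq_C_mul, map_mul, map_pow, map_neg, map_one, map_natCast, map_sum, apply_ite,
    map_prod, mk_span_X_pow_Umac, map_zero]

/-- `U*_{2t}` in terms of the `U_{2k}`, summed over partitions `(1^{m₁},…,t^{m_t}) ⊢ t`. -/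
theorem UmacStar_in_terms_of_Umac (t : ℕ) (ht : 0 < t) :
    UmacStar t = ((-1 : ℚ) ^ t) •
      ∑ m ∈ Fintype.piFinset fun _ : Fin t => Finset.range (t + 1),
        if ∑ i, (i.1 + 1) * m i = t then
          ((-1 : ℚ) ^ (∑ i, m i) * (Nat.multinomial Finset.univ m : ℚ)) •
            ∏ i : Fin t, Umac (i.1 + 1) ^ m i
        else 0 :=
  UmacStar_in_terms_of_Umac_general t
end
end

section
/- For all positive integers β and t, (βt−1)! · Σ_{k≥1} q^{tk}(1−q^k)^{−βt} = L(∏_{s=1}^{βt−1}(x − t + s)) in ℚ⟦q⟧, where the product on the right is expanded in ℚ[x] and then evaluated by the umbral map L. -/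
open PowerSeries Finset

noncomputable section

/-- `S_j(q) = Σ_{m≥1} m^j qᵐ/(1-qᵐ)`, defined coefficientwise by truncation. -/
def Sser (j : ℕ) : ℚ⟦X⟧ := PowerSeries.mk fun N =>
  coeff N (∑ m ∈ Finset.Icc 1 N, ((m : ℚ) ^ j) • (X ^ m * (1 - X ^ m : ℚ⟦X⟧)⁻¹))

/-- The umbral evaluation `L : ℚ[x] → ℚ⟦q⟧`, determined ℚ-linearly by `xᵐ ↦ S_m(q)`. -/
def umbral (p : Polynomial ℚ) : ℚ⟦X⟧ := p.sum fun i a => a • Sser i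

/-- `Σ_{k≥1} q^{tk}(1-qᵏ)^{-βt}`, defined coefficientwise by truncation. -/
def Hser (b t : ℕ) : ℚ⟦X⟧ := PowerSeries.mk fun N =>
  coeff N (∑ k ∈ Finset.Icc 1 N, X ^ (t * k) * ((1 - X ^ k : ℚ⟦X⟧)⁻¹) ^ (b * t))

/-! Writing `L = βt - 1`, both sides are Lambert-type series whose `q^N` coefficient is a sum over
the divisors `d ∣ N`. On the left, the binomial series of `(1 - qᵏ)^{-(L+1)}` shows that
`d = N / k` contributes `L! · C(d + L - t, L)`. On the right, `d` contributes the value at `x = d`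
of `∏_{s=1}^{L} (x - t + s)`, the falling factorial `(d + L - t)(d + L - t - 1)⋯(d - t + 1)`,
which is `L! · C(d + L - t, L)` as well; for `1 ≤ d < t` both vanish because `t ≤ L + 1`. -/

namespace PowerSeries

variable {K : Type*} [Field K]

theorem expand_invOneSubPow (k : ℕ) (hk : k ≠ 0) (d : ℕ) :
    expand k hk (invOneSubPow K d : K⟦X⟧) = ((1 - X ^ k : K⟦X⟧)⁻¹) ^ d := by
  have hunit : (invOneSubPow K d : K⟦X⟧) * (1 - X) ^ d = 1 := by
    rw [← invOneSubPow_inv_eq_one_sub_pow, Units.inv_eq_val_inv, Units.mul_inv]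
  have hconst : constantCoeff ((1 - X ^ k : K⟦X⟧) ^ d) ≠ 0 := by
    simp [zero_pow hk]
  have hexpand : expand k hk (invOneSubPow K d : K⟦X⟧) * (1 - X ^ k) ^ d = 1 := by
    simpa using congrArg (expand k hk) hunit
  rw [(eq_inv_iff_mul_eq_one hconst).2 hexpand, eq_comm, eq_inv_iff_mul_eq_one hconst, ← mul_pow,
    PowerSeries.inv_mul_cancel _ (by simp [zero_pow hk]), one_pow]

theorem coeff_X_pow_mul_invOneSubPow_succ {R : Type*} [CommRing R] {t L d : ℕ}
    (hd : 0 < d) (htL : t ≤ L + 1) :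
    coeff d (X ^ t * (invOneSubPow R (L + 1) : R⟦X⟧)) = ((d + L - t).choose L : R) := by
  rw [coeff_X_pow_mul', invOneSubPow_val_succ_eq_mk_add_choose, coeff_mk]
  split_ifs with htd
  · rw [show L + (d - t) = d + L - t by omega]
  · rw [Nat.choose_eq_zero_of_lt (by omega), Nat.cast_zero]

theorem coeff_sum_Icc_smul_X_pow_mul_inv_one_sub_X_pow_pow (c : ℕ → K) {t L : ℕ}
    (htL : t ≤ L + 1) (N : ℕ) :
    coeff N (∑ k ∈ Icc 1 N, c k • (X ^ (t * k) * ((1 - X ^ k : K⟦X⟧)⁻¹) ^ (L + 1))) =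
      ∑ k ∈ N.divisors, c k * ((N / k + L - t).choose L : K) := by
  have hterm : ∀ k ∈ Icc 1 N, coeff N (c k • (X ^ (t * k) * ((1 - X ^ k : K⟦X⟧)⁻¹) ^ (L + 1))) =
      if k ∣ N then c k * ((N / k + L - t).choose L : K) else 0 := by
    intro k hk
    obtain ⟨hk1, hkN⟩ := mem_Icc.1 hk
    have hk0 : k ≠ 0 := by omega
    rw [← expand_invOneSubPow k hk0, mul_comm t, pow_mul, ← expand_X k hk0, ← map_pow,
      ← map_mul, coeff_smul, coeff_expand, smul_eq_mul]
    split_ifs with hdvd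
    · rw [coeff_X_pow_mul_invOneSubPow_succ (Nat.div_pos (Nat.le_of_dvd (by omega) hdvd) hk1) htL]
    · rw [mul_zero]
  rw [map_sum, sum_congr rfl hterm, ← sum_filter, Nat.divisors, Ico_add_one_right_eq_Icc]

end PowerSeries

theorem prod_Icc_add_sub_eq_descPochhammer_eval {R : Type*} [CommRing R] (r a : R) (L : ℕ) :
    ∏ s ∈ Icc 1 L, (r + ((s : R) - a)) = (descPochhammer R L).eval (r + L - a) := by
  induction L with
  | zero => simp
  | succ L ih =>
    rw [prod_Icc_succ_top (by omega), ih, descPochhammer_succ_left, Polynomial.eval_mul,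
      Polynomial.eval_X, Polynomial.eval_comp, Polynomial.eval_sub, Polynomial.eval_X,
      Polynomial.eval_one]
    push_cast
    rw [show r + (L + 1) - a - 1 = r + L - a by ring]
    ring

theorem eval_natCast_prod_Icc_X_add_C_sub {R : Type*} [CommRing R] {m t L : ℕ}
    (h : t ≤ m + L) :
    (∏ s ∈ Icc 1 L, (Polynomial.X + Polynomial.C ((s : R) - t)) : Polynomial R).eval (m : R) =
      (L.factorial : R) * (m + L - t).choose L := by
  simp only [Polynomial.eval_prod, Polynomial.eval_add, Polynomial.eval_X, Polynomial.eval_C]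
  rw [prod_Icc_add_sub_eq_descPochhammer_eval, show (m + L - t : R) = ((m + L - t : ℕ) : R) by
    push_cast [Nat.cast_sub h]; ring, descPochhammer_eval_eq_descFactorial,
    Nat.descFactorial_eq_factorial_mul_choose, Nat.cast_mul]

theorem coeff_Sser (j N : ℕ) : coeff N (Sser j) = ∑ m ∈ N.divisors, (m : ℚ) ^ j := by
  have h := coeff_sum_Icc_smul_X_pow_mul_inv_one_sub_X_pow_pow (fun m => (m : ℚ) ^ j)
    (t := 1) (L := 0) le_rfl N
  simp only [one_mul, zero_add, pow_one, Nat.choose_zero_right, Nat.cast_one, mul_one] at h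
  rw [Sser, coeff_mk, h]

theorem coeff_umbral (p : Polynomial ℚ) (N : ℕ) :
    coeff N (umbral p) = ∑ m ∈ N.divisors, p.eval (m : ℚ) := by
  simp only [umbral, Polynomial.sum_def, map_sum, coeff_smul, coeff_Sser, smul_eq_mul, mul_sum]
  rw [sum_comm]
  simp only [Polynomial.eval_eq_sum, Polynomial.sum_def]

theorem coeff_Hser {b t : ℕ} (hb : 0 < b) (ht : 0 < t) (N : ℕ) :
    coeff N (Hser b t) = ∑ d ∈ N.divisors, ((d + (b * t - 1) - t).choose (b * t - 1) : ℚ) := by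
  have hbt : b * t - 1 + 1 = b * t := Nat.sub_add_cancel (Nat.mul_pos hb ht)
  have h := coeff_sum_Icc_smul_X_pow_mul_inv_one_sub_X_pow_pow (fun _ => (1 : ℚ))
    (t := t) (L := b * t - 1) (by rw [hbt]; exact Nat.le_mul_of_pos_left t hb) N
  simp only [one_smul, one_mul, hbt] at h
  rw [Hser, coeff_mk, h]
  exact Nat.sum_div_divisors N fun d => ((d + (b * t - 1) - t).choose (b * t - 1) : ℚ)

/-- The umbral identity `(βt-1)! Σ_{k≥1} q^{tk}/(1-qᵏ)^{βt} = L(∏_{s=1}^{βt-1}(x-t+s))`. -/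
theorem umbral_identity (b t : ℕ) (hb : 0 < b) (ht : 0 < t) :
    (((b * t - 1).factorial : ℚ)) • Hser b t =
      umbral (∏ s ∈ Finset.Icc 1 (b * t - 1),
        (Polynomial.X + Polynomial.C ((s : ℚ) - (t : ℚ)))) := by
  have htL : t ≤ b * t - 1 + 1 := by
    rw [Nat.sub_add_cancel (Nat.mul_pos hb ht)]; exact Nat.le_mul_of_pos_left t hb
  ext N
  rw [coeff_smul, coeff_Hser hb ht, coeff_umbral, smul_eq_mul, mul_sum]
  refine sum_congr rfl fun d hd => ?_
  rw [eval_natCast_prod_Icc_X_add_C_sub (by have := Nat.pos_of_mem_divisors hd; omega)]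
end
end

section
/- Σ_{t≥0} U_{2t}(q) = ∏_{k≥1} (1−q^{6k}) · ((1−q^k)(1−q^{2k})(1−q^{3k}))^{−1} in ℚ⟦q⟧. -/
open PowerSeries Finset

noncomputable section

/-- `Σ_{t≥0} U_{2t}(q)`, well defined since `U_{2t}` has order `≥ t(t+1)/2 ≥ t`. -/
def sumU : ℚ⟦X⟧ := PowerSeries.mk fun N => ∑ t ∈ Finset.range (N + 1), coeff N (Umac t)


/-! Expanding `∏ₖ (1 + qᵏ/(1 - qᵏ)²)` over the subsets of the index set gives `Σₜ U₂ₜ`. Each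
factor is `(1 - qᵏ + q²ᵏ)/(1 - qᵏ)² = (1 + q³ᵏ)/((1 + qᵏ)(1 - qᵏ)²)`, and multiplying numerator
and denominator by `1 - q³ᵏ` turns it into `(1 - q⁶ᵏ)/((1 - qᵏ)(1 - q²ᵏ)(1 - q³ᵏ))`. Only the
factors with `k ≤ N` and the subsets with fewer than `N + 1` elements contribute to `q^N`. -/

theorem one_add_mul_sq_eq_of_mul_eq_one {R : Type*} [CommRing R] {y a b c : R}
    (ha : (1 - y) * a = 1) (hb : (1 - y ^ 2) * b = 1) (hc : (1 - y ^ 3) * c = 1) :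
    1 + y * a ^ 2 = (1 - y ^ 6) * (a * b * c) := by
  linear_combination (-(1 + y ^ 3) * a * b) * hc - (1 - y + y ^ 2) * a ^ 2 * hb +
    ((1 - y + y ^ 2) * a * (1 + y) * b - (1 - y) * a - 1) * ha

namespace PowerSeries

section Field

variable {K : Type*} [Field K]

theorem one_sub_X_pow_mul_inv {k : ℕ} (hk : 0 < k) : (1 - X ^ k : K⟦X⟧) * (1 - X ^ k)⁻¹ = 1 :=
  PowerSeries.mul_inv_cancel _ (by simp [zero_pow hk.ne'])

theorem one_add_X_pow_mul_inv_sq {k : ℕ} (hk : 0 < k) :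
    1 + X ^ k * ((1 - X ^ k : K⟦X⟧)⁻¹) ^ 2 =
      (1 - X ^ (6 * k)) * ((1 - X ^ k)⁻¹ * (1 - X ^ (2 * k))⁻¹ * (1 - X ^ (3 * k))⁻¹) := by
  have hb := one_sub_X_pow_mul_inv (K := K) (by omega : 0 < 2 * k)
  have hc := one_sub_X_pow_mul_inv (K := K) (by omega : 0 < 3 * k)
  simp only [pow_mul' _ _ k] at hb hc ⊢
  exact one_add_mul_sq_eq_of_mul_eq_one (one_sub_X_pow_mul_inv hk) hb hc

end Field

variable {R : Type*} [CommRing R]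

theorem X_pow_dvd_sum_powersetCard_prod {ι : Type*} {f : ι → R⟦X⟧} {s : Finset ι}
    (hf : ∀ i ∈ s, X ∣ f i) (t : ℕ) : X ^ t ∣ ∑ S ∈ s.powersetCard t, ∏ i ∈ S, f i := by
  refine Finset.dvd_sum fun S hS => ?_
  obtain ⟨hSs, rfl⟩ := mem_powersetCard.mp hS
  simpa using Finset.prod_dvd_prod_of_dvd (fun _ => X) f fun i hi => hf i (hSs hi)

theorem coeff_mul_one_add_of_X_pow_dvd {N : ℕ} (p : R⟦X⟧) {g : R⟦X⟧} (hg : X ^ (N + 1) ∣ g) :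
    coeff N (p * (1 + g)) = coeff N p := by
  rw [mul_one_add, map_add, X_pow_dvd_iff.mp (hg.mul_left p) N (lt_add_one N), add_zero]

end PowerSeries

/-- `Σ_{t≥0} U_{2t} = ∏_{k≥1} (1-q^{6k})/((1-qᵏ)(1-q^{2k})(1-q^{3k}))`. -/
theorem sum_Umac_eq :
    sumU = PowerSeries.mk fun N => coeff N (∏ k ∈ Finset.Icc 1 N,
      ((1 - X ^ (6 * k)) *
        ((1 - X ^ k : ℚ⟦X⟧)⁻¹ * (1 - X ^ (2 * k) : ℚ⟦X⟧)⁻¹ * (1 - X ^ (3 * k) : ℚ⟦X⟧)⁻¹))) := by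
  set f : ℕ → ℚ⟦X⟧ := fun k => X ^ k * ((1 - X ^ k)⁻¹) ^ 2
  ext N
  have hf : ∀ k ∈ Icc 1 (N + 1), X ∣ f k := fun k hk =>
    (dvd_pow_self X (Nat.one_le_iff_ne_zero.mp (mem_Icc.mp hk).1)).mul_right _
  calc coeff N sumU
      = ∑ t ∈ range (N + 2), coeff N (∑ S ∈ (Icc 1 (N + 1)).powersetCard t, ∏ k ∈ S, f k) := by
        rw [sum_range_succ, X_pow_dvd_iff.mp (X_pow_dvd_sum_powersetCard_prod hf (N + 1)) N
          (lt_add_one N), add_zero]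
        simp only [sumU, Umac, coeff_mk]
        rfl
    _ = coeff N (∏ k ∈ Icc 1 (N + 1), (1 + f k)) := by
        rw [prod_one_add, sum_powerset, map_sum, Nat.card_Icc, Nat.add_sub_cancel]
    _ = coeff N (∏ k ∈ Icc 1 N, (1 + f k)) := by
        rw [prod_Icc_succ_top (Nat.le_add_left 1 N)]
        exact coeff_mul_one_add_of_X_pow_dvd _ ((dvd_refl _).mul_right _)
    _ = _ := by
        rw [coeff_mk, prod_congr rfl fun k hk => one_add_X_pow_mul_inv_sq (mem_Icc.mp hk).1]
end
end

section
/- For all nonnegative integers α, β, γ, one has 2^α · α! · c_v(α,β,γ) = c_v(0,β,γ) · ∏_{i=0}^{2α−1} (1 + 4β + 6γ + i); equivalently, c_v(α,β,γ)/c_v(0,β,γ) = (1+4β+6γ)_{2α}/(2^α·α!), where (x)_n = x(x+1)⋯(x+n−1) is the Pochhammer symbol. -/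
def Qp (x : ℚ) (n : ℕ) : ℚ := ∏ i ∈ Finset.range n, (x + i)

lemma Qp_zero (x : ℚ) : Qp x 0 = 1 := by simp [Qp]

lemma Qp_succ (x : ℚ) (n : ℕ) : Qp x (n+1) = Qp x n * (x + n) := by
  simp [Qp, Finset.prod_range_succ]

lemma Qp_left (x : ℚ) (n : ℕ) : Qp x (n+1) = x * Qp (x+1) n := by
  rw [Qp, Finset.prod_range_succ']
  rw [Finset.prod_congr rfl (fun i _ => by push_cast; ring :
    ∀ i ∈ Finset.range n, x + ((i+1 : ℕ):ℚ) = (x+1) + (i:ℚ))]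
  rw [Qp]; push_cast; ring

lemma Qp_left2 (x : ℚ) (n : ℕ) : Qp x (n+2) = x * (x+1) * Qp (x+2) n := by
  rw [Qp_left, Qp_left, show (x+1)+1 = x+2 from by ring]; ring

lemma Qp_left4 (x : ℚ) (n : ℕ) : Qp x (n+4) = x*(x+1)*(x+2)*(x+3) * Qp (x+4) n := by
  rw [show n+4 = (n+2)+2 from rfl, Qp_left2, Qp_left2,
    show (x+2)+1 = x+3 from by ring, show (x+2)+2 = x+4 from by ring]; ring

/-- Proposition 5.5 of the paper: for the coefficients `c_v` of Ramanujan's `V_{2t}`,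
`c_v(α,β,γ)/c_v(0,β,γ) = (1+4β+6γ)_{2α}/(2^α·α!)`, i.e.
`2^α·α!·c_v(α,β,γ) = c_v(0,β,γ)·∏_{i=0}^{2α-1}(1+4β+6γ+i)`. -/
theorem cv_vary_alpha
    (c : ℤ → ℤ → ℤ → ℚ)
    (hc_neg : ∀ a b g : ℤ, a < 0 ∨ b < 0 ∨ g < 0 → c a b g = 0)
    (hc_zero : c 0 0 0 = 1)
    (hc_rec : ∀ a b g : ℤ, 0 ≤ a → 0 ≤ b → 0 ≤ g → ¬(a = 0 ∧ b = 0 ∧ g = 0) →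
      c a b g = ((2 * a + 8 * b + 12 * g - 1 : ℤ) : ℚ) * c (a - 1) b g
        - 2 * ((a : ℚ) + 1) * c (a + 1) (b - 1) g
        - 8 * ((b : ℚ) + 1) * c a (b + 1) (g - 1)
        - 12 * ((g : ℚ) + 1) * c a (b - 2) (g + 1))
    (a b g : ℕ) :
    (2 : ℚ) ^ a * (a.factorial : ℚ) * c a b g =
      c 0 b g * ∏ i ∈ Finset.range (2 * a), ((1 + 4 * b + 6 * g + i : ℕ) : ℚ) := by
  have key : ∀ n : ℕ, ∀ (a : ℕ) (b g : ℤ), (a:ℤ) + 2*b + 3*g ≤ n →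
      (2:ℚ)^a * (a.factorial : ℚ) * c (a:ℤ) b g
        = Qp (1 + 4*(b:ℚ) + 6*(g:ℚ)) (2*a) * c 0 b g := by
    intro n
    induction n with
    | zero =>
      intro a b g hle
      rcases lt_or_ge b 0 with hb | hb
      · rw [hc_neg _ _ _ (Or.inr (Or.inl hb)), hc_neg _ _ _ (Or.inr (Or.inl hb))]; ring
      rcases lt_or_ge g 0 with hg | hg
      · rw [hc_neg _ _ _ (Or.inr (Or.inr hg)), hc_neg _ _ _ (Or.inr (Or.inr hg))]; ring
      have ha : a = 0 := by omega
      subst ha; simp [Qp]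
    | succ n ih =>
      intro a b g hle
      rcases lt_or_ge b 0 with hb | hb
      · rw [hc_neg _ _ _ (Or.inr (Or.inl hb)), hc_neg _ _ _ (Or.inr (Or.inl hb))]; ring
      rcases lt_or_ge g 0 with hg | hg
      · rw [hc_neg _ _ _ (Or.inr (Or.inr hg)), hc_neg _ _ _ (Or.inr (Or.inr hg))]; ring
      cases a with
      | zero => simp [Qp]
      | succ A =>
        have hle' : (A:ℤ) + 1 + 2*b + 3*g ≤ n + 1 := by push_cast at hle; omega
        have hA := ih A b g (by omega)
        have hB := ih (A+2) (b-1) g (by push_cast; omega)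
        have hC := ih (A+1) (b+1) (g-1) (by push_cast; omega)
        have hD := ih (A+1) (b-2) (g+1) (by push_cast; omega)
        have h1 := ih 1 (b-1) g (by push_cast; omega)
        have E1 := hc_rec ((A:ℤ)+1) b g (by omega) hb hg (by omega)
        have E0 : (4*(b:ℚ)+6*g) * (4*(b:ℚ)+6*g-1) * c 0 b g
            = (4*(b:ℚ)+6*g) * (4*(b:ℚ)+6*g-1) *
              (-2 * c 1 (b-1) g - 8*((b:ℚ)+1) * c 0 (b+1) (g-1)
               - 12*((g:ℚ)+1) * c 0 (b-2) (g+1)) := by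
          by_cases hbg : b = 0 ∧ g = 0
          · obtain ⟨h1', h2'⟩ := hbg; subst h1'; subst h2'; push_cast; ring
          · have := hc_rec 0 b g le_rfl hb hg (by tauto)
            rw [hc_neg (0-1) b g (by omega)] at this
            norm_num at this
            rw [this]; ring
        simp only [Nat.factorial_succ, Nat.factorial_one, Nat.factorial_zero] at hA hB hC hD h1 ⊢
        push_cast at hA hB hC hD h1 E1 ⊢
        simp only [show ((A:ℤ)+1-1 : ℤ) = (A:ℤ) from by ring,
          show ((A:ℤ)+1+1 : ℤ) = (A:ℤ)+2 from by ring] at E1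
        rw [show 2*(A+2) = 2*A+4 from by ring, Qp_left4,
          show (1 + 4*((b:ℚ) - 1) + 6*(g:ℚ)) + 4 = 1 + 4*(b:ℚ) + 6*(g:ℚ) from by ring] at hB
        rw [show 2*(A+1) = 2*A+2 from by ring, Qp_left2,
          show (1 + 4*((b:ℚ) + 1) + 6*((g:ℚ) - 1)) + 2 = 1 + 4*(b:ℚ) + 6*(g:ℚ) from by ring] at hC
        rw [show 2*(A+1) = 2*A+2 from by ring, Qp_left2,
          show (1 + 4*((b:ℚ) - 2) + 6*((g:ℚ) + 1)) + 2 = 1 + 4*(b:ℚ) + 6*(g:ℚ) from by ring] at hD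
        rw [show (2:ℕ) = 0+2 from rfl, Qp_left2, Qp_zero] at h1
        rw [show 2*(A+1) = 2*A+1+1 from by ring, Qp_succ, Qp_succ]
        push_cast
        linear_combination
          (2^(A+1) * (((A:ℚ)+1) * (A.factorial:ℚ))) * E1
          + (2*((A:ℚ)+1) * (2*((A:ℚ)+1)+8*(b:ℚ)+12*(g:ℚ)-1)) * hA
          - hB
          - 8*((b:ℚ)+1) * hC
          - 12*((g:ℚ)+1) * hD
          + ((4*(b:ℚ)+6*(g:ℚ)-1)*(4*(b:ℚ)+6*(g:ℚ)) * Qp (1+4*(b:ℚ)+6*(g:ℚ)) (2*A)) * h1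
          - (Qp (1+4*(b:ℚ)+6*(g:ℚ)) (2*A)) * E0
  have h := key (a + 2*b + 3*g) a b g (by push_cast; omega)
  rw [h]
  rw [show (∏ i ∈ Finset.range (2 * a), ((1 + 4 * b + 6 * g + i : ℕ) : ℚ))
      = Qp (1 + 4*((b:ℤ):ℚ) + 6*((g:ℤ):ℚ)) (2*a) from
    Finset.prod_congr rfl (fun i _ => by push_cast; ring)]
  ring
end
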